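/- arXiv:1308.0527 — 4 statements merged into one kernel-verified Lean document; each statement's English description precedes it below -/
import Mathlib

section
/- Let U : H → H be unitary and Σ((φ₁,φ₂),(ψ₁,ψ₂)) = ⟨φ₁,ψ₂⟩ − ⟨φ₂,ψ₁⟩ on H × H. Then the subspace W = { ((I+U)φ, −i(I−U)φ) : φ ∈ H } is maximally Σ-isotropic, i.e. W equals its Σ-orthogonal complement. -/
/-!
A pair `x` has the form `(φ + Uφ, -i(φ - Uφ))` exactly when `U (i x₁ - x₂) = i x₁ + x₂`,
the parameter being recovered as `φ = -(i/2)(i x₁ - x₂)`. Since `U` preserves inner products,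
`Σ(x, (ψ + Uψ, -i(ψ - Uψ))) = ⟪U (i x₁ - x₂) - (i x₁ + x₂), Uψ⟫`, and as `Uψ` runs over all
of `H`, `x` is `Σ`-orthogonal to `W` exactly when this defect vanishes, i.e. when `x ∈ W`.
-/

open Complex

theorem cayley_pair_exists_iff {M : Type*} [AddCommGroup M] [Module ℂ M] (U : M →ₗ[ℂ] M)
    (x : M × M) :
    (∃ φ : M, x = (φ + U φ, -I • (φ - U φ))) ↔ U (I • x.1 - x.2) = I • x.1 + x.2 := by
  constructor
  · rintro ⟨φ, rfl⟩
    have h : I • (φ + U φ) - -I • (φ - U φ) = (2 * I) • φ := by module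
    rw [h, map_smul]
    module
  · intro h
    refine ⟨(-I / 2) • (I • x.1 - x.2), ?_⟩
    rw [map_smul, h]
    ext <;> match_scalars <;> ring_nf <;> simp [I_sq]

theorem inner_cayley_pair_eq {H : Type*} [NormedAddCommGroup H] [InnerProductSpace ℂ H]
    (U : H →ₗᵢ[ℂ] H) (x : H × H) (ψ : H) :
    inner ℂ x.1 (-I • (ψ - U ψ)) - inner ℂ x.2 (ψ + U ψ)
      = inner ℂ (U (I • x.1 - x.2) - (I • x.1 + x.2)) (U ψ) := by
  rw [inner_sub_left, LinearIsometry.inner_map_map]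
  simp only [inner_add_left, inner_sub_left, inner_add_right, inner_sub_right,
      inner_smul_left, inner_smul_right, conj_I]
  ring

theorem cayley_parametrized_subspace_maximally_isotropic_general {H : Type*} [NormedAddCommGroup H]
    [InnerProductSpace ℂ H] (U : H ≃ₗᵢ[ℂ] H) :
    {p : H × H | ∃ φ : H, p = (φ + U φ, -Complex.I • (φ - U φ))}
      = {x : H × H | ∀ y ∈ {p : H × H | ∃ φ : H, p = (φ + U φ, -Complex.I • (φ - U φ))},
          (inner ℂ x.1 y.2 : ℂ) - inner ℂ x.2 y.1 = 0} := by
  ext x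
  simp only [Set.mem_ofPred_eq, forall_exists_index, forall_eq_apply_imp_iff]
  refine (cayley_pair_exists_iff (U : H →ₗ[ℂ] H) x).trans ?_
  set defect := U (I • x.1 - x.2) - (I • x.1 + x.2)
  have hform : ∀ ψ, inner ℂ x.1 (-I • (ψ - U ψ)) - inner ℂ x.2 (ψ + U ψ) = inner ℂ defect (U ψ) :=
    inner_cayley_pair_eq U.toLinearIsometry x
  rw [← sub_eq_zero]
  change defect = 0 ↔ _
  simp only [hform]
  constructor
  · intro h ψ
    rw [h, inner_zero_left]
  · intro h
    simpa using h (U.symm defect)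

/-- For a unitary `U : H → H`, the subspace `W = {((I+U)φ, −i(I−U)φ) : φ ∈ H}` is
maximally isotropic for `Σ((φ₁,φ₂),(ψ₁,ψ₂)) = ⟪φ₁,ψ₂⟫ − ⟪φ₂,ψ₁⟫`: it equals its
`Σ`-orthogonal complement. -/
theorem cayley_parametrized_subspace_maximally_isotropic {H : Type*} [NormedAddCommGroup H]
    [InnerProductSpace ℂ H] [CompleteSpace H] (U : H ≃ₗᵢ[ℂ] H) :
    {p : H × H | ∃ φ : H, p = (φ + U φ, -Complex.I • (φ - U φ))}
      = {x : H × H | ∀ y ∈ {p : H × H | ∃ φ : H, p = (φ + U φ, -Complex.I • (φ - U φ))},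
          (inner ℂ x.1 y.2 : ℂ) - inner ℂ x.2 y.1 = 0} :=
  cayley_parametrized_subspace_maximally_isotropic_general U
end

section
/- Let U : H → H be unitary. Then the operator M on H × H given in block form by M(φ₁,φ₂) = ((I−U)φ₁ − i(I+U)φ₂, (I+U*)φ₁ + i(I−U*)φ₂) is, after division by 2, a unitary operator on H × H; in particular M(φ₁,φ₂) = 0 implies (φ₁,φ₂) = (0,0). -/
/-!
With respect to the direct-sum inner product, the block operator
`M = [[I - U, -i(I + U)], [I + U*, i(I - U*)]]` has adjoint
`M* = [[I - U*, I + U], [i(I + U*), -i(I - U)]]`, and since `U*U = UU* = I` all cross terms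
in `M*M` and `MM*` cancel, leaving `4I`. So `⟪Mx, My⟫ = 4⟪x, y⟫`, which makes `M` injective,
and `M (M* y / 4) = y` makes it surjective.
-/

open ContinuousLinearMap

namespace ContinuousLinearMap

variable {H : Type*} [NormedAddCommGroup H] [InnerProductSpace ℂ H] [CompleteSpace H]
  {U : H →L[ℂ] H}

lemma adjoint_apply_apply_of_mem_unitary (hU : U ∈ unitary (H →L[ℂ] H)) (a : H) :
    adjoint U (U a) = a := by
  simpa [star_eq_adjoint] using congr($(Unitary.star_mul_self_of_mem hU) a)

lemma apply_adjoint_apply_of_mem_unitary (hU : U ∈ unitary (H →L[ℂ] H)) (a : H) :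
    U (adjoint U a) = a := by
  simpa [star_eq_adjoint] using congr($(Unitary.mul_star_self_of_mem hU) a)

end ContinuousLinearMap

lemma Prod.eq_zero_of_inner_self_add_inner_self_eq_zero {𝕜 E F : Type*} [RCLike 𝕜]
    [NormedAddCommGroup E] [InnerProductSpace 𝕜 E]
    [NormedAddCommGroup F] [InnerProductSpace 𝕜 F]
    {x : E × F} (h : inner 𝕜 x.1 x.1 + inner 𝕜 x.2 x.2 = (0 : 𝕜)) : x = 0 := by
  have : WithLp.toLp 2 x = 0 := inner_self_eq_zero.1 (h ▸ WithLp.prod_inner_apply _ _)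
  simpa using this

section BlockOperator

variable {H : Type*} [NormedAddCommGroup H] [InnerProductSpace ℂ H] [CompleteSpace H]
  {U : H →L[ℂ] H}

variable (U) in
noncomputable def blockOp : H × H →ₗ[ℂ] H × H where
  toFun x :=
    ((x.1 - U x.1) - Complex.I • (x.2 + U x.2),
     (x.1 + adjoint U x.1) + Complex.I • (x.2 - adjoint U x.2))
  map_add' x y := by
    ext <;> simp only [map_add, Prod.fst_add, Prod.snd_add] <;> module
  map_smul' c x := by
    ext <;> simp only [map_smul, Prod.smul_fst, Prod.smul_snd, RingHom.id_apply] <;> module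

lemma inner_blockOp_fst_add_inner_blockOp_snd (hU : U ∈ unitary (H →L[ℂ] H)) (x y : H × H) :
    inner ℂ (blockOp U x).1 (blockOp U y).1 + inner ℂ (blockOp U x).2 (blockOp U y).2
      = 4 * (inner ℂ x.1 y.1 + inner ℂ x.2 y.2 : ℂ) := by
  simp only [blockOp, LinearMap.coe_mk, AddHom.coe_mk, inner_sub_left, inner_sub_right,
    inner_add_left, inner_add_right, inner_smul_left, inner_smul_right, map_add, map_sub,
    map_smul, adjoint_inner_left, adjoint_inner_right, apply_adjoint_apply_of_mem_unitary hU,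
    inner_map_map_of_mem_unitary hU, Complex.conj_I]
  ring_nf
  simp only [Complex.I_sq]
  ring

lemma blockOp_injective (hU : U ∈ unitary (H →L[ℂ] H)) : Function.Injective (blockOp U) := by
  refine (injective_iff_map_eq_zero _).2 fun x hx =>
    Prod.eq_zero_of_inner_self_add_inner_self_eq_zero (𝕜 := ℂ) ?_
  simpa [hx] using (inner_blockOp_fst_add_inner_blockOp_snd hU x x).symm

lemma blockOp_surjective (hU : U ∈ unitary (H →L[ℂ] H)) :
    Function.Surjective (blockOp U) := by
  intro y
  -- the preimage `M* y / 4`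
  refine ⟨(4 : ℂ)⁻¹ • ((y.1 - adjoint U y.1) + (y.2 + U y.2),
    Complex.I • (y.1 + adjoint U y.1) - Complex.I • (y.2 - U y.2)), ?_⟩
  simp only [blockOp, LinearMap.coe_mk, AddHom.coe_mk, map_add, map_sub, map_smul,
    adjoint_apply_apply_of_mem_unitary hU, apply_adjoint_apply_of_mem_unitary hU]
  ext <;> simp only [Prod.smul_fst, Prod.smul_snd] <;> match_scalars <;> ring_nf <;>
    simp only [Complex.I_sq] <;> ring

end BlockOperator

/-- For a unitary `U : H → H`, the block operator
`M(φ₁,φ₂) = ((I−U)φ₁ − i(I+U)φ₂, (I+U*)φ₁ + i(I−U*)φ₂)` is, after division by `2`,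
a unitary operator on `H × H` (linear, bijective, and `⟪Mx, My⟫ = 4⟪x,y⟫` for the
direct-sum inner product); in particular `M(φ₁,φ₂) = 0` implies `(φ₁,φ₂) = 0`. -/
theorem block_operator_M_unitary {H : Type*} [NormedAddCommGroup H]
    [InnerProductSpace ℂ H] [CompleteSpace H]
    (U : H →L[ℂ] H) (hU : U ∈ unitary (H →L[ℂ] H))
    (M : H × H → H × H)
    (hM : M = fun x =>
      ((x.1 - U x.1) - Complex.I • (x.2 + U x.2),
       (x.1 + ContinuousLinearMap.adjoint U x.1)
         + Complex.I • (x.2 - ContinuousLinearMap.adjoint U x.2))) :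
    IsLinearMap ℂ M ∧ Function.Bijective M ∧
      (∀ x y : H × H,
        (inner ℂ (M x).1 (M y).1 : ℂ) + inner ℂ (M x).2 (M y).2
          = 4 * ((inner ℂ x.1 y.1 : ℂ) + inner ℂ x.2 y.2)) ∧
      (∀ x : H × H, M x = 0 → x = 0) := by
  obtain rfl : M = blockOp U := hM
  have hinj := blockOp_injective hU
  exact ⟨(blockOp U).isLinear, ⟨hinj, blockOp_surjective hU⟩,
    inner_blockOp_fst_add_inner_blockOp_snd hU, (injective_iff_map_eq_zero _).1 hinj⟩
end

section
/- For c > 0, the function f(μ) = e^{−4πμ} − (μ − c)/(μ + c) has exactly one zero in (0, ∞), i.e. the equation e^{−4πμ} = (μ − c)/(μ + c) has exactly one solution μ > 0; for c < 0 it has no solution μ > 0, and for c = 0 the only solution is μ = 0. -/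
/-!
For `μ > 0` the left side `e^{-4πμ}` of the equation lies in `(0, 1)` and decreases. If `c > 0`,
the right side `(μ - c)/(μ + c)` increases from `-1` at `μ = 0` to `1` at infinity, so the two
sides cross exactly once. If `c < 0`, the right side is `≤ 0` or `> 1` for every `μ > 0`. If
`c = 0`, the equation reads `e^{-4πμ} μ = μ`.
-/

open Real Set Filter Topology

/-- The function `f` of the paper, with `4π` generalized to `a`. -/
noncomputable def robinSecularFun (a c μ : ℝ) : ℝ := exp (-(a * μ)) - (μ - c) / (μ + c)

section
variable {a c : ℝ}

theorem exp_neg_mul_lt_one (ha : 0 < a) {μ : ℝ} (hμ : 0 < μ) : exp (-(a * μ)) < 1 :=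
  exp_lt_one_iff.2 (neg_neg_of_pos (mul_pos ha hμ))

theorem strictMonoOn_sub_div_add (hc : 0 < c) :
    StrictMonoOn (fun μ : ℝ => (μ - c) / (μ + c)) (Ioi (-c)) := by
  intro x hx y hy hxy
  have hx' : 0 < x + c := neg_lt_iff_pos_add.1 hx
  have hy' : 0 < y + c := neg_lt_iff_pos_add.1 hy
  rw [div_lt_div_iff₀ hx' hy']
  nlinarith

theorem tendsto_sub_div_add_atTop (c : ℝ) :
    Tendsto (fun μ : ℝ => (μ - c) / (μ + c)) atTop (𝓝 1) := by
  have h : Tendsto (fun μ : ℝ => 1 - 2 * c / (μ + c)) atTop (𝓝 (1 - 0)) :=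
    tendsto_const_nhds.sub (tendsto_const_nhds.div_atTop (tendsto_atTop_add_const_right _ c tendsto_id))
  rw [sub_zero] at h
  refine h.congr' ?_
  filter_upwards [eventually_gt_atTop (-c)] with μ hμ
  have : μ + c ≠ 0 := (neg_lt_iff_pos_add.1 hμ).ne'
  field_simp
  ring

theorem strictAntiOn_robinSecularFun (ha : 0 ≤ a) (hc : 0 < c) :
    StrictAntiOn (robinSecularFun a c) (Ioi (-c)) := by
  intro x hx y hy hxy
  have hexp : exp (-(a * y)) ≤ exp (-(a * x)) := exp_le_exp.2 (by nlinarith)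
  have hdiv := strictMonoOn_sub_div_add hc hx hy hxy
  simp only [robinSecularFun]
  linarith

theorem continuousOn_robinSecularFun :
    ContinuousOn (robinSecularFun a c) (Ioi (-c)) := by
  refine ContinuousOn.sub (by fun_prop) (ContinuousOn.div (by fun_prop) (by fun_prop) ?_)
  intro μ hμ
  exact (neg_lt_iff_pos_add.1 hμ).ne'

theorem robinSecularFun_zero (hc : c ≠ 0) : robinSecularFun a c 0 = 2 := by
  rw [robinSecularFun, mul_zero, neg_zero, exp_zero, zero_sub, zero_add, neg_div, div_self hc]
  norm_num

theorem tendsto_robinSecularFun_atTop (ha : 0 < a) :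
    Tendsto (robinSecularFun a c) atTop (𝓝 (-1)) := by
  have hexp : Tendsto (fun μ => exp (-(a * μ))) atTop (𝓝 0) :=
    tendsto_exp_neg_atTop_nhds_zero.comp (tendsto_id.const_mul_atTop ha)
  have h := hexp.sub (tendsto_sub_div_add_atTop c)
  rwa [zero_sub] at h

theorem exists_pos_robinSecularFun_eq_zero (ha : 0 < a) (hc : 0 < c) :
    ∃ μ, 0 < μ ∧ robinSecularFun a c μ = 0 := by
  obtain ⟨M, hM, hM0⟩ := (((tendsto_robinSecularFun_atTop (c := c) ha).eventually
    (gt_mem_nhds (by norm_num : (-1 : ℝ) < 0))).and (eventually_gt_atTop 0)).exists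
  have hcont : ContinuousOn (robinSecularFun a c) (Icc 0 M) :=
    continuousOn_robinSecularFun.mono fun μ hμ => (neg_neg_of_pos hc).trans_le hμ.1
  have hzero : (0 : ℝ) ∈ Ioo (robinSecularFun a c M) (robinSecularFun a c 0) :=
    ⟨hM, by rw [robinSecularFun_zero hc.ne']; norm_num⟩
  obtain ⟨μ, hμ, hμ0⟩ := intermediate_value_Ioo' hM0.le hcont hzero
  exact ⟨μ, hμ.1, hμ0⟩

theorem existsUnique_pos_robinSecularFun_eq_zero (ha : 0 < a) (hc : 0 < c) :
    ∃! μ, 0 < μ ∧ robinSecularFun a c μ = 0 := by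
  obtain ⟨μ, hμ, hμ0⟩ := exists_pos_robinSecularFun_eq_zero ha hc
  refine ⟨μ, ⟨hμ, hμ0⟩, fun ν ⟨hν, hν0⟩ => ?_⟩
  have hpos : ∀ {x : ℝ}, 0 < x → x ∈ Ioi (-c) := fun hx => (neg_neg_of_pos hc).trans hx
  exact (strictAntiOn_robinSecularFun ha.le hc).injOn (hpos hν) (hpos hμ) (hν0.trans hμ0.symm)

theorem sub_div_add_nonpos_or_one_lt (hc : c < 0) {μ : ℝ} (hμ : 0 < μ) :
    (μ - c) / (μ + c) ≤ 0 ∨ 1 < (μ - c) / (μ + c) := by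
  rcases le_or_gt (μ + c) 0 with h | h
  · exact Or.inl (div_nonpos_of_nonneg_of_nonpos (by linarith) h)
  · exact Or.inr ((one_lt_div h).2 (by linarith))

theorem robinSecularFun_ne_zero_of_neg (ha : 0 < a) (hc : c < 0) {μ : ℝ} (hμ : 0 < μ) :
    robinSecularFun a c μ ≠ 0 := by
  have hexp_pos := exp_pos (-(a * μ))
  have hexp_lt := exp_neg_mul_lt_one ha hμ
  rw [robinSecularFun, sub_ne_zero]
  intro heq
  rcases sub_div_add_nonpos_or_one_lt hc hμ with h | h <;> linarith

theorem exp_neg_mul_mul_self_eq_self_iff (ha : 0 < a) {μ : ℝ} (hμ : 0 ≤ μ) :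
    exp (-(a * μ)) * μ = μ ↔ μ = 0 := by
  refine ⟨fun h => ?_, fun h => by simp [h]⟩
  by_contra hne
  have hpos := hμ.lt_of_ne' hne
  have hlt := exp_neg_mul_lt_one ha hpos
  nlinarith [mul_pos (sub_pos.2 hlt) hpos]

end

/-- The equation `e^{−4πμ} = (μ − c)/(μ + c)` determining the negative eigenvalues of
the Robin Laplacian: for `c > 0` it has exactly one solution `μ > 0`; for `c < 0` it
has no solution `μ > 0`; and for `c = 0` the only solution `μ ≥ 0` is `μ = 0`
(stated via the equivalent form `e^{−4πμ}(μ + c) = μ − c`). -/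
theorem robin_negative_eigenvalue_equation (c : ℝ) :
    (0 < c → ∃! μ : ℝ, 0 < μ ∧
        Real.exp (-(4 * Real.pi * μ)) = (μ - c) / (μ + c)) ∧
    (c < 0 → ∀ μ : ℝ, 0 < μ →
        Real.exp (-(4 * Real.pi * μ)) ≠ (μ - c) / (μ + c)) ∧
    (c = 0 → ∀ μ : ℝ, 0 ≤ μ →
        (Real.exp (-(4 * Real.pi * μ)) * (μ + c) = μ - c ↔ μ = 0)) := by
  have ha : 0 < 4 * π := by positivity
  refine ⟨fun hc => ?_, fun hc μ hμ => ?_, fun hc μ hμ => ?_⟩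
  · simpa only [robinSecularFun, sub_eq_zero] using existsUnique_pos_robinSecularFun_eq_zero ha hc
  · simpa only [robinSecularFun, sub_ne_zero] using robinSecularFun_ne_zero_of_neg ha hc hμ
  · subst hc
    simpa only [add_zero, sub_zero] using exp_neg_mul_mul_self_eq_self_iff ha hμ
end

section
/- Let R be an essentially self-adjoint operator on a dense domain D(R) ⊆ H₁, let {Γᵢ} be an orthonormal basis of a Hilbert space H₂, and let A = R ⊗ I on the domain of finite sums Σᵢ Φᵢ ⊗ Γᵢ with Φᵢ ∈ D(R). Then A is essentially self-adjoint on H₁ ⊗ H₂, i.e. ker(A† − i) = ker(A† + i) = {0}. -/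
/-!
If `Ψ` is orthogonal to every `(A + σ)(φ ⊗ Γᵢ) = ((R + σ)φ) ⊗ Γᵢ`, then the continuous bilinear form
`(a, b) ↦ ⟪Ψ, a ⊗ b⟫` vanishes on `ran(R + σ) × {Γᵢ}`. Essential self-adjointness of `R` makes
`ran(R + σ)` dense in `H₁`, and the `Γᵢ` span a dense subspace of `H₂`, so the form vanishes
identically; as the elementary tensors span a dense subspace of `H`, `Ψ = 0`. The form is
continuous because `‖a ⊗ b‖ = ‖a‖ ‖b‖`.
-/

open Submodule

section

variable {𝕜 E F G : Type*} [RCLike 𝕜]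
  [NormedAddCommGroup E] [InnerProductSpace 𝕜 E]
  [NormedAddCommGroup F] [InnerProductSpace 𝕜 F]
  [NormedAddCommGroup G] [InnerProductSpace 𝕜 G]

theorem LinearMap.norm_apply_apply_of_inner_apply_apply (t : E →ₗ[𝕜] F →ₗ[𝕜] G)
    (ht : ∀ (a c : E) (b d : F), inner 𝕜 (t a b) (t c d) = inner 𝕜 a c * inner 𝕜 b d)
    (a : E) (b : F) : ‖t a b‖ = ‖a‖ * ‖b‖ := by
  have h := ht a a b b
  simp only [inner_self_eq_norm_sq_to_K] at h
  have hsq : ‖t a b‖ ^ 2 = (‖a‖ * ‖b‖) ^ 2 := by rw [mul_pow]; exact_mod_cast h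
  exact (sq_eq_sq₀ (norm_nonneg _) (by positivity)).mp hsq

theorem dense_span_of_forall_inner_eq_zero [CompleteSpace E] {S : Set E}
    (h : ∀ ψ : E, (∀ x ∈ S, inner 𝕜 ψ x = 0) → ψ = 0) : Dense (span 𝕜 S : Set E) := by
  rw [dense_iff_topologicalClosure_eq_top, topologicalClosure_eq_top_iff, eq_bot_iff]
  intro ψ hψ
  exact h ψ fun x hx => (mem_orthogonal' _ ψ).mp hψ x (subset_span hx)

theorem ContinuousLinearMap.eq_zero_of_dense_span₂ {S : Set E} {T : Set F}
    (hS : Dense (span 𝕜 S : Set E)) (hT : Dense (span 𝕜 T : Set F))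
    (B : E →L[𝕜] F →L[𝕜] G) (h : ∀ a ∈ S, ∀ b ∈ T, B a b = 0) : B = 0 := by
  have hflip : ∀ b ∈ T, B.flip b = 0 := fun b hb => ext_on hS fun a ha => h a ha b hb
  ext1 a
  exact ext_on hT fun b hb => by simpa using congr($(hflip b hb) a)

end

theorem tensor_with_identity_essentially_selfAdjoint_general {H1 H2 H : Type*}
    [NormedAddCommGroup H1] [InnerProductSpace ℂ H1] [CompleteSpace H1]
    [NormedAddCommGroup H2] [InnerProductSpace ℂ H2]
    [NormedAddCommGroup H] [InnerProductSpace ℂ H]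
    {ι : Type*} (t : H1 →ₗ[ℂ] H2 →ₗ[ℂ] H)
    (ht : ∀ (a c : H1) (b d : H2),
      (inner ℂ (t a b) (t c d) : ℂ) = (inner ℂ a c : ℂ) * (inner ℂ b d : ℂ))
    (htdense : (Submodule.span ℂ {x : H | ∃ a b, x = t a b}).topologicalClosure = ⊤)
    (Γ : ι → H2)
    (hΓbasis : (Submodule.span ℂ (Set.range Γ)).topologicalClosure = ⊤)
    (D : Submodule ℂ H1)
    (R : D →ₗ[ℂ] H1)
    (hess : ∀ σ : ℂ, σ = Complex.I ∨ σ = -Complex.I →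
      ∀ ψ : H1, (∀ φ : D, (inner ℂ ψ (R φ + σ • (φ : H1)) : ℂ) = 0) → ψ = 0) :
    ∀ σ : ℂ, σ = Complex.I ∨ σ = -Complex.I →
      ∀ Ψ : H, (∀ (i : ι) (φ : D),
          (inner ℂ Ψ (t (R φ + σ • (φ : H1)) (Γ i)) : ℂ) = 0) → Ψ = 0 := by
  intro σ hσ Ψ hΨ
  let T : H1 →L[ℂ] H2 →L[ℂ] H := t.mkContinuous₂ 1 fun a b => by
    rw [one_mul, t.norm_apply_apply_of_inner_apply_apply ht]
  have hRσ : Dense (span ℂ (Set.range fun φ : D => R φ + σ • (φ : H1)) : Set H1) :=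
    dense_span_of_forall_inner_eq_zero fun ψ hψ => hess σ hσ ψ fun φ => hψ _ ⟨φ, rfl⟩
  have hΨT : (ContinuousLinearMap.compL ℂ H2 H ℂ (innerSL ℂ Ψ)).comp T = 0 :=
    ContinuousLinearMap.eq_zero_of_dense_span₂ hRσ
      (dense_iff_topologicalClosure_eq_top.mpr hΓbasis) _ <| by
        rintro _ ⟨φ, rfl⟩ _ ⟨i, rfl⟩
        exact hΨ i φ
  have hΨ0 : innerSL ℂ Ψ = 0 :=
    ContinuousLinearMap.ext_on (dense_iff_topologicalClosure_eq_top.mpr htdense) <| by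
      rintro _ ⟨a, b, rfl⟩
      simpa [T] using congr($hΨT a b)
  simpa using congr($hΨ0 Ψ)

/-- Essential self-adjointness of `A = R ⊗ I` on the Hilbert tensor product
`H = H₁ ⊗ H₂`: the tensor product is encoded by a bilinear map `t : H₁ → H₂ → H` with
`⟪t a b, t c d⟫ = ⟪a,c⟫⟪b,d⟫` and total range, `{Γᵢ}` is an orthonormal basis of `H₂`,
and `R` is a symmetric, essentially self-adjoint operator on the dense domain
`D(R) ⊆ H₁` (trivial deficiency spaces `ker(R† ∓ i) = {0}`). Then the deficiency
spaces of `A`, acting by `A(φ ⊗ Γᵢ) = (Rφ) ⊗ Γᵢ` on finite sums, are trivial: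
any `Ψ ∈ H` orthogonal to `(A ± i)x` for every `x` in the domain vanishes. -/
theorem tensor_with_identity_essentially_selfAdjoint {H1 H2 H : Type*}
    [NormedAddCommGroup H1] [InnerProductSpace ℂ H1] [CompleteSpace H1]
    [NormedAddCommGroup H2] [InnerProductSpace ℂ H2] [CompleteSpace H2]
    [NormedAddCommGroup H] [InnerProductSpace ℂ H] [CompleteSpace H]
    {ι : Type*} (t : H1 →ₗ[ℂ] H2 →ₗ[ℂ] H)
    (ht : ∀ (a c : H1) (b d : H2),
      (inner ℂ (t a b) (t c d) : ℂ) = (inner ℂ a c : ℂ) * (inner ℂ b d : ℂ))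
    (htdense : (Submodule.span ℂ {x : H | ∃ a b, x = t a b}).topologicalClosure = ⊤)
    (Γ : ι → H2) (hΓ : Orthonormal ℂ Γ)
    (hΓbasis : (Submodule.span ℂ (Set.range Γ)).topologicalClosure = ⊤)
    (D : Submodule ℂ H1) (hD : D.topologicalClosure = ⊤)
    (R : D →ₗ[ℂ] H1)
    (hsym : ∀ ψ χ : D, (inner ℂ ((ψ : H1)) (R χ) : ℂ) = inner ℂ (R ψ) ((χ : H1)))
    (hess : ∀ σ : ℂ, σ = Complex.I ∨ σ = -Complex.I →
      ∀ ψ : H1, (∀ φ : D, (inner ℂ ψ (R φ + σ • (φ : H1)) : ℂ) = 0) → ψ = 0) :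
    ∀ σ : ℂ, σ = Complex.I ∨ σ = -Complex.I →
      ∀ Ψ : H, (∀ (i : ι) (φ : D),
          (inner ℂ Ψ (t (R φ + σ • (φ : H1)) (Γ i)) : ℂ) = 0) → Ψ = 0 :=
  tensor_with_identity_essentially_selfAdjoint_general t ht htdense Γ hΓbasis D R hess
end
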